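/- Let u < v in S_n and let t = (i j) be an inversion-minimal transposition on (u,v). Then the R-polynomials satisfy R_{u,v}(q) = q·R_{ut,vt}(q) + (q−1)·R_{u,vt}(q). -/
import Mathlib


open Equiv

/-- The number of inversions of a permutation of `Fin n`. -/
def invLen {n : ℕ} (z : Perm (Fin n)) : ℕ :=
  (Finset.univ.filter fun p : Fin n × Fin n => p.1 < p.2 ∧ z p.2 < z p.1).card

/-- `t` is a transposition. -/
def IsTransposition {n : ℕ} (t : Perm (Fin n)) : Prop :=
  ∃ i j : Fin n, i ≠ j ∧ t = Equiv.swap i j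

/-- One step in the Bruhat order: right multiplication by a transposition which
increases the length. -/
def BruhatStep {n : ℕ} (u v : Perm (Fin n)) : Prop :=
  (∃ t, IsTransposition t ∧ v = u * t) ∧ invLen u < invLen v

/-- The strong Bruhat order on the symmetric group. -/
def BruhatLE {n : ℕ} (u v : Perm (Fin n)) : Prop :=
  Relation.ReflTransGen BruhatStep u v

/-- Strict Bruhat order. -/
def BruhatLT {n : ℕ} (u v : Perm (Fin n)) : Prop := BruhatLE u v ∧ u ≠ v

/-- Cover relation in the (graded) Bruhat order. -/
def BruhatCov {n : ℕ} (u v : Perm (Fin n)) : Prop :=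
  BruhatLE u v ∧ invLen v = invLen u + 1

/-- The transposition `(i k)` is inversion-minimal on `(u,v)`: `[i,k]` is an
inclusion-minimal interval `[p,q]` with `v p > v q` and `u p < u q`. -/
def InvMinimal {n : ℕ} (u v : Perm (Fin n)) (i k : Fin n) : Prop :=
  i < k ∧ v k < v i ∧ u i < u k ∧
  ∀ p q : Fin n, i ≤ p → p < q → q ≤ k → ¬(p = i ∧ q = k) → ¬(v q < v p ∧ u p < u q)

/-- The vector `(z 0, …, z (n-1))` in `ℝⁿ` associated to a permutation. -/
def permVec {n : ℕ} (z : Perm (Fin n)) : Fin n → ℝ := fun i => ((z i : ℕ) : ℝ)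

lemma swap_adj_lt {n : ℕ} {a b : Fin n} (hab : (a:ℕ)+1 = (b:ℕ)) {p q : Fin n}
    (hpq : p < q) (hne : ¬(p = a ∧ q = b)) : Equiv.swap a b p < Equiv.swap a b q := by
  have vne : ∀ {x y : Fin n}, x ≠ y → (x:ℕ) ≠ (y:ℕ) := fun h h' => h (Fin.ext h')
  have veq : ∀ {x y : Fin n}, x = y → (x:ℕ) = (y:ℕ) := fun h => by rw [h]
  rw [Fin.lt_def] at hpq
  by_cases hpa : p = a
  · have hqb : q ≠ b := fun h => hne ⟨hpa, h⟩
    have hqa : q ≠ a := fun h => by have := veq hpa; have := veq h; omega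
    rw [hpa, swap_apply_left, swap_apply_of_ne_of_ne hqa hqb, Fin.lt_def]
    have := vne hqb; have := veq hpa; omega
  · by_cases hpb : p = b
    · have hqa : q ≠ a := fun h => by have := veq hpb; have := veq h; omega
      have hqb : q ≠ b := fun h => by have := veq hpb; have := veq h; omega
      rw [hpb, swap_apply_right, swap_apply_of_ne_of_ne hqa hqb, Fin.lt_def]
      have := veq hpb; omega
    · rw [swap_apply_of_ne_of_ne hpa hpb]
      by_cases hqa : q = a
      · rw [hqa, swap_apply_left, Fin.lt_def]
        have := vne hpa; have := vne hpb; have := veq hqa; omega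
      · by_cases hqb : q = b
        · rw [hqb, swap_apply_right, Fin.lt_def]
          have := vne hpa; have := vne hpb; have := veq hqb; omega
        · rw [swap_apply_of_ne_of_ne hqa hqb, Fin.lt_def]; omega

lemma invLen_mul_swap_adj {n : ℕ} (w : Perm (Fin n)) {a b : Fin n} (hab : (a:ℕ)+1 = (b:ℕ)) :
    invLen (w * Equiv.swap a b) < invLen w ↔ w b < w a := by
  classical
  set s := Equiv.swap a b with hs
  have haltb : a < b := by rw [Fin.lt_def]; omega
  have hane : a ≠ b := ne_of_lt haltb
  have hwne : w b ≠ w a := fun h => hane (w.injective h).symm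
  set A := Finset.univ.filter (fun p : Fin n × Fin n => p.1 < p.2 ∧ w (s p.2) < w (s p.1)) with hA
  set B := Finset.univ.filter (fun p : Fin n × Fin n => p.1 < p.2 ∧ w p.2 < w p.1) with hB
  have hsa : s a = b := Equiv.swap_apply_left a b
  have hsb : s b = a := Equiv.swap_apply_right a b
  have hss : ∀ x, s (s x) = x := fun x => Equiv.swap_apply_self a b x
  have hinv : invLen (w * s) = A.card := rfl
  have hinvw : invLen w = B.card := rfl
  have key : (A.erase (a,b)).card = (B.erase (a,b)).card := by
    apply Finset.card_bij' (fun p _ => (s p.1, s p.2)) (fun p _ => (s p.1, s p.2))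
    · intro p hp
      rw [Finset.mem_erase, hA, Finset.mem_filter] at hp
      obtain ⟨hne, -, hlt, hw⟩ := hp
      rw [Finset.mem_erase, hB, Finset.mem_filter]
      have hne' : ¬(p.1 = a ∧ p.2 = b) := fun ⟨h1, h2⟩ => hne (Prod.ext h1 h2)
      refine ⟨?_, Finset.mem_univ _, swap_adj_lt hab hlt hne', hw⟩
      intro h
      have h1 : s p.1 = a := congrArg Prod.fst h
      have h2 : s p.2 = b := congrArg Prod.snd h
      have : p.1 = b := by rw [← hss p.1, h1, hsa]
      have : p.2 = a := by rw [← hss p.2, h2, hsb]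
      rw [‹p.1 = b›, ‹p.2 = a›] at hlt
      exact absurd haltb (asymm hlt)
    · intro p hp
      rw [Finset.mem_erase, hB, Finset.mem_filter] at hp
      obtain ⟨hne, -, hlt, hw⟩ := hp
      rw [Finset.mem_erase, hA, Finset.mem_filter]
      have hne' : ¬(p.1 = a ∧ p.2 = b) := fun ⟨h1, h2⟩ => hne (Prod.ext h1 h2)
      refine ⟨?_, Finset.mem_univ _, swap_adj_lt hab hlt hne', by rw [hss, hss]; exact hw⟩
      intro h
      have h1 : s p.1 = a := congrArg Prod.fst h
      have h2 : s p.2 = b := congrArg Prod.snd h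
      have : p.1 = b := by rw [← hss p.1, h1, hsa]
      have : p.2 = a := by rw [← hss p.2, h2, hsb]
      rw [‹p.1 = b›, ‹p.2 = a›] at hlt
      exact absurd haltb (asymm hlt)
    · intro p _; exact Prod.ext (hss p.1) (hss p.2)
    · intro p _; exact Prod.ext (hss p.1) (hss p.2)
  have hmemA : (a,b) ∈ A ↔ w a < w b := by
    rw [hA, Finset.mem_filter]
    constructor
    · intro h; have := h.2.2; rwa [hsa, hsb] at this
    · intro h; exact ⟨Finset.mem_univ _, haltb, by rwa [hsa, hsb]⟩
  have hmemB : (a,b) ∈ B ↔ w b < w a := by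
    rw [hB, Finset.mem_filter]
    exact ⟨fun h => h.2.2, fun h => ⟨Finset.mem_univ _, haltb, h⟩⟩
  rw [hinv, hinvw]
  rcases lt_or_gt_of_ne hwne with h | h
  · simp only [h, iff_true]
    have hAe : A.erase (a,b) = A := Finset.erase_eq_of_notMem (fun hm => asymm h (hmemA.1 hm))
    rw [hAe] at key
    have := Finset.card_erase_add_one (hmemB.2 h)
    omega
  · have hnot : ¬ w b < w a := asymm h
    simp only [hnot, iff_false, not_lt]
    have hBe : B.erase (a,b) = B := Finset.erase_eq_of_notMem (fun hm => hnot (hmemB.1 hm))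
    rw [hBe] at key
    have := Finset.card_erase_add_one (hmemA.2 h)
    omega

lemma aux14 {n : ℕ} (R : Perm (Fin n) → Perm (Fin n) → Polynomial ℤ)
    (h2 : ∀ (u v : Perm (Fin n)) (j : Fin n) (hj : (j : ℕ) + 1 < n),
      invLen (v * Equiv.swap j ⟨(j : ℕ) + 1, hj⟩) < invLen v →
        (invLen (u * Equiv.swap j ⟨(j : ℕ) + 1, hj⟩) < invLen u →
          R u v = R (u * Equiv.swap j ⟨(j : ℕ) + 1, hj⟩)
            (v * Equiv.swap j ⟨(j : ℕ) + 1, hj⟩)) ∧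
        (¬ invLen (u * Equiv.swap j ⟨(j : ℕ) + 1, hj⟩) < invLen u →
          R u v = Polynomial.X * R (u * Equiv.swap j ⟨(j : ℕ) + 1, hj⟩)
              (v * Equiv.swap j ⟨(j : ℕ) + 1, hj⟩)
            + (Polynomial.X - 1) * R u (v * Equiv.swap j ⟨(j : ℕ) + 1, hj⟩))) :
    ∀ (d : ℕ) (u v : Perm (Fin n)) (i k : Fin n), (k:ℕ) - (i:ℕ) ≤ d →
      InvMinimal u v i k →
      R u v = Polynomial.X * R (u * Equiv.swap i k) (v * Equiv.swap i k)
        + (Polynomial.X - 1) * R u (v * Equiv.swap i k) := by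
  intro d
  induction d with
  | zero =>
    intro u v i k hd hmin
    exfalso
    have := hmin.1
    rw [Fin.lt_def] at this
    omega
  | succ d ih =>
    intro u v i k hd hmin
    obtain ⟨hik, hvki, huik, hminlt⟩ := hmin
    have hikv : (i:ℕ) < (k:ℕ) := hik
    have hi1n : (i:ℕ) + 1 < n := lt_of_le_of_lt hikv k.isLt
    set i₁ : Fin n := ⟨(i:ℕ)+1, hi1n⟩ with hi₁def
    have hi₁v : (i₁:ℕ) = (i:ℕ)+1 := rfl
    have vne : ∀ {x y : Fin n}, (x:ℕ) ≠ (y:ℕ) → x ≠ y := fun h h' => h (congrArg Fin.val h')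
    have hii₁ : i < i₁ := by rw [Fin.lt_def]; omega
    have hi₁lek : (i₁:ℕ) ≤ (k:ℕ) := by omega
    by_cases hbase : (k:ℕ) = (i:ℕ)+1
    -- Base case : k = i + 1
    · have hk : k = i₁ := Fin.ext hbase
      subst hk
      have hdv : invLen (v * Equiv.swap i i₁) < invLen v :=
        (invLen_mul_swap_adj v rfl).2 hvki
      have hndu : ¬ invLen (u * Equiv.swap i i₁) < invLen u := fun h =>
        absurd ((invLen_mul_swap_adj u rfl).1 h) (not_lt.2 (le_of_lt huik))
      exact (h2 u v i hi1n hdv).2 hndu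
    -- Inductive step : k > i + 1
    · have hstep : (i:ℕ) + 1 < (k:ℕ) := lt_of_le_of_ne (by omega) (Ne.symm hbase)
      set s : Perm (Fin n) := Equiv.swap i i₁ with hsdef
      set t : Perm (Fin n) := Equiv.swap i k with htdef
      set t' : Perm (Fin n) := Equiv.swap i₁ k with ht'def
      have hki : k ≠ i := vne (by omega)
      have hki₁ : k ≠ i₁ := vne (by omega)
      have hi₁i : i₁ ≠ i := vne (by omega)
      have hi₁k : i₁ ≠ k := vne (by omega)
      -- values of s and t
      have sv_i : s i = i₁ := Equiv.swap_apply_left _ _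
      have sv_i1 : s i₁ = i := Equiv.swap_apply_right _ _
      have sv_k : s k = k := Equiv.swap_apply_of_ne_of_ne hki hki₁
      have tv_i : t i = k := Equiv.swap_apply_left _ _
      have tv_k : t k = i := Equiv.swap_apply_right _ _
      have tv_i1 : t i₁ = i₁ := Equiv.swap_apply_of_ne_of_ne hi₁i hi₁k
      -- conjugation identity
      have hconj : t = s * t' * s := by
        have h1 : Equiv.swap (s i₁) (s k) = s * t' * s⁻¹ := Equiv.swap_apply_apply s i₁ k
        rw [sv_i1, sv_k, Equiv.swap_inv] at h1
        exact h1
      have hmul : ∀ w : Perm (Fin n), w * t * s = w * s * t' := by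
        intro w
        rw [hconj]
        simp [mul_assoc, show s * s = 1 from Equiv.swap_mul_self i i₁]
      have hss' : ∀ w : Perm (Fin n), w * s * s = w := fun w => by
        rw [mul_assoc, show s * s = 1 from Equiv.swap_mul_self i i₁, mul_one]
      -- injectivity-derived ne facts on values
      have hvne1 : v i ≠ v i₁ := fun h => hi₁i (v.injective h).symm
      have hune1 : u i ≠ u i₁ := fun h => hi₁i (u.injective h).symm
      have hvnek1 : v k ≠ v i₁ := fun h => hki₁ (v.injective h)
      have hunek1 : u k ≠ u i₁ := fun h => hki₁ (u.injective h)
      -- the two minimality instances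
      have hmin_ii1 : ¬(v i₁ < v i ∧ u i < u i₁) :=
        hminlt i i₁ le_rfl hii₁ (Fin.le_def.2 hi₁lek)
          (fun h => hi₁k h.2)
      have hmin_i1k : ¬(v k < v i₁ ∧ u i₁ < u k) :=
        hminlt i₁ k (le_of_lt hii₁) (lt_of_le_of_ne (Fin.le_def.2 hi₁lek) hi₁k) le_rfl
          (fun h => hi₁i h.1)
      -- minimality transfers to (u*s, v*s) on [i₁, k]
      have hmin' : InvMinimal (u * s) (v * s) i₁ k := by
        refine ⟨lt_of_le_of_ne (Fin.le_def.2 hi₁lek) hi₁k, ?_, ?_, ?_⟩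
        · show v (s k) < v (s i₁); rw [sv_k, sv_i1]; exact hvki
        · show u (s i₁) < u (s k); rw [sv_i1, sv_k]; exact huik
        · intro p q hp hpq hqk hne
          have hqv : (i₁:ℕ) < (q:ℕ) := lt_of_le_of_lt hp hpq
          have hqi : q ≠ i := vne (by omega)
          have hqi₁ : q ≠ i₁ := vne (by omega)
          have sv_q : s q = q := Equiv.swap_apply_of_ne_of_ne hqi hqi₁
          show ¬(v (s q) < v (s p) ∧ u (s p) < u (s q))
          rw [sv_q]
          by_cases hpi1 : p = i₁
          · rw [hpi1, sv_i1]
            have hqk' : q ≠ k := fun h => hne ⟨hpi1, h⟩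
            exact hminlt i q le_rfl (hii₁.trans (lt_of_le_of_lt hp hpq)) hqk
              (fun h => hqk' h.2)
          · have hpv : (i₁:ℕ) ≤ (p:ℕ) := hp
            have hpi : p ≠ i := vne (by omega)
            have sv_p : s p = p := Equiv.swap_apply_of_ne_of_ne hpi hpi1
            rw [sv_p]
            exact hminlt p q (le_of_lt (lt_of_lt_of_le hii₁ hp)) hpq hqk
              (fun h => hpi h.1)
      -- apply induction hypothesis
      have hIH := ih (u * s) (v * s) i₁ k (by omega) hmin'
      rw [← ht'def, ← hmul u, ← hmul v] at hIH
      -- case split on direction at (i, i₁)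
      rcases lt_or_gt_of_ne hvne1 with hvA | hvB
      -- Case A : v i < v i₁ (both ascents)
      · have hvk1 : v k < v i₁ := hvki.trans hvA
        have huk1 : u k < u i₁ := by
          rcases lt_or_gt_of_ne hunek1 with h | h
          · exact h
          · exact absurd ⟨hvk1, h⟩ hmin_i1k
        have huA : u i < u i₁ := huik.trans huk1
        -- E1
        have hdvs : invLen ((v * s) * s) < invLen (v * s) := by
          refine (invLen_mul_swap_adj (v * s) rfl).2 ?_
          show v (s i₁) < v (s i); rw [sv_i1, sv_i]; exact hvA
        have hdus : invLen ((u * s) * s) < invLen (u * s) := by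
          refine (invLen_mul_swap_adj (u * s) rfl).2 ?_
          show u (s i₁) < u (s i); rw [sv_i1, sv_i]; exact huA
        have E1 : R (u * s) (v * s) = R u v := by
          have := (h2 (u * s) (v * s) i hi1n hdvs).1 hdus
          rwa [show (u*s) * Equiv.swap i ⟨(i:ℕ)+1, hi1n⟩ = u from hss' u,
               show (v*s) * Equiv.swap i ⟨(i:ℕ)+1, hi1n⟩ = v from hss' v] at this
        -- E2
        have hdvts : invLen ((v * t * s) * s) < invLen (v * t * s) := by
          refine (invLen_mul_swap_adj (v * t * s) rfl).2 ?_
          show v (t (s i₁)) < v (t (s i)); rw [sv_i1, sv_i, tv_i, tv_i1]; exact hvk1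
        have hduts : invLen ((u * t * s) * s) < invLen (u * t * s) := by
          refine (invLen_mul_swap_adj (u * t * s) rfl).2 ?_
          show u (t (s i₁)) < u (t (s i)); rw [sv_i1, sv_i, tv_i, tv_i1]; exact huk1
        have E2 : R (u * t * s) (v * t * s) = R (u * t) (v * t) := by
          have := (h2 (u * t * s) (v * t * s) i hi1n hdvts).1 hduts
          rwa [show (u*t*s) * Equiv.swap i ⟨(i:ℕ)+1, hi1n⟩ = u * t from hss' (u*t),
               show (v*t*s) * Equiv.swap i ⟨(i:ℕ)+1, hi1n⟩ = v * t from hss' (v*t)] at this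
        -- E3
        have E3 : R (u * s) (v * t * s) = R u (v * t) := by
          have := (h2 (u * s) (v * t * s) i hi1n hdvts).1 hdus
          rwa [show (u*s) * Equiv.swap i ⟨(i:ℕ)+1, hi1n⟩ = u from hss' u,
               show (v*t*s) * Equiv.swap i ⟨(i:ℕ)+1, hi1n⟩ = v * t from hss' (v*t)] at this
        rw [← E1, hIH, E2, E3]
      -- Case B : v i₁ < v i (both descents)
      · have huB : u i₁ < u i := by
          rcases lt_or_gt_of_ne hune1 with h | h
          · exact absurd ⟨hvB, h⟩ hmin_ii1
          · exact h
        have hv1k : v i₁ < v k := by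
          rcases lt_or_gt_of_ne hvnek1 with h | h
          · exact absurd ⟨h, huB.trans huik⟩ hmin_i1k
          · exact h
        -- E1
        have hdv : invLen (v * s) < invLen v := (invLen_mul_swap_adj v rfl).2 hvB
        have hdu : invLen (u * s) < invLen u := (invLen_mul_swap_adj u rfl).2 huB
        have E1 : R u v = R (u * s) (v * s) := (h2 u v i hi1n hdv).1 hdu
        -- E2
        have hdvt : invLen ((v * t) * s) < invLen (v * t) := by
          refine (invLen_mul_swap_adj (v * t) rfl).2 ?_
          show v (t i₁) < v (t i); rw [tv_i1, tv_i]; exact hv1k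
        have hdut : invLen ((u * t) * s) < invLen (u * t) := by
          refine (invLen_mul_swap_adj (u * t) rfl).2 ?_
          show u (t i₁) < u (t i); rw [tv_i1, tv_i]; exact huB.trans huik
        have E2 : R (u * t) (v * t) = R (u * t * s) (v * t * s) :=
          (h2 (u * t) (v * t) i hi1n hdvt).1 hdut
        -- E3
        have E3 : R u (v * t) = R (u * s) (v * t * s) :=
          (h2 u (v * t) i hi1n hdvt).1 hdu
        rw [E1, hIH, ← E2, ← E3]

/-- The recurrence for `R`-polynomials generalizes to inversion-minimal
transpositions: `R_{u,v} = q R_{ut,vt} + (q-1) R_{u,vt}`. -/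
theorem stmt14 (n : ℕ) (R : Perm (Fin n) → Perm (Fin n) → Polynomial ℤ)
    (h0 : ∀ u v, ¬ BruhatLE u v → R u v = 0)
    (h1 : ∀ u, R u u = 1)
    (h2 : ∀ (u v : Perm (Fin n)) (j : Fin n) (hj : (j : ℕ) + 1 < n),
      invLen (v * Equiv.swap j ⟨(j : ℕ) + 1, hj⟩) < invLen v →
        (invLen (u * Equiv.swap j ⟨(j : ℕ) + 1, hj⟩) < invLen u →
          R u v = R (u * Equiv.swap j ⟨(j : ℕ) + 1, hj⟩)
            (v * Equiv.swap j ⟨(j : ℕ) + 1, hj⟩)) ∧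
        (¬ invLen (u * Equiv.swap j ⟨(j : ℕ) + 1, hj⟩) < invLen u →
          R u v = Polynomial.X * R (u * Equiv.swap j ⟨(j : ℕ) + 1, hj⟩)
              (v * Equiv.swap j ⟨(j : ℕ) + 1, hj⟩)
            + (Polynomial.X - 1) * R u (v * Equiv.swap j ⟨(j : ℕ) + 1, hj⟩)))
    (u v : Perm (Fin n)) (hlt : BruhatLT u v) (i k : Fin n)
    (hmin : InvMinimal u v i k) :
    R u v = Polynomial.X * R (u * Equiv.swap i k) (v * Equiv.swap i k)
      + (Polynomial.X - 1) * R u (v * Equiv.swap i k) := by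
  exact aux14 R h2 ((k:ℕ) - (i:ℕ)) u v i k le_rfl hmin
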